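/- In the graph G_k (k ≥ 5), the Steiner k-eccentricity of the vertex d_1 equals k+3; in particular, the Steiner distance of the full set D = {d_1,...,d_k} is k+3. -/

import Mathlib

/-- The Steiner distance of a vertex set `S` in `G`: the minimum number of edges
of a connected subgraph of `G` containing all vertices of `S`. -/
noncomputable def steinerDist {V : Type*} [Fintype V] (G : SimpleGraph V) (S : Set V) : ℕ :=
  sInf {n | ∃ H : G.Subgraph, H.Connected ∧ S ⊆ H.verts ∧ H.edgeSet.ncard = n}

/-- The Steiner `k`-eccentricity of a vertex `v`:
the maximum Steiner distance of a `k`-set containing `v`. -/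
noncomputable def steinerEcc {V : Type*} [Fintype V] (G : SimpleGraph V) (k : ℕ) (v : V) : ℕ :=
  sSup {n | ∃ S : Finset V, v ∈ S ∧ S.card = k ∧ steinerDist G (S : Set V) = n}

/-- The Steiner `k`-radius of `G`. -/
noncomputable def srad {V : Type*} [Fintype V] (G : SimpleGraph V) (k : ℕ) : ℕ :=
  sInf (Set.range (steinerEcc G k))

/-- The Steiner `k`-diameter of `G`. -/
noncomputable def sdiam {V : Type*} [Fintype V] (G : SimpleGraph V) (k : ℕ) : ℕ :=
  sSup (Set.range (steinerEcc G k))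

/-- `H` is a Steiner tree for `S` in `G`: a connected acyclic subgraph containing `S`
whose number of edges equals the Steiner distance of `S`. -/
def IsSteinerTree {V : Type*} [Fintype V] (G : SimpleGraph V) (S : Set V) (H : G.Subgraph) :
    Prop :=
  H.Connected ∧ S ⊆ H.verts ∧ H.coe.IsAcyclic ∧ H.edgeSet.ncard = steinerDist G S

/-- The set of leaves (vertices of degree 1) of a subgraph. -/
noncomputable def subLeaves {V : Type*} [Fintype V] {G : SimpleGraph V} (H : G.Subgraph) :
    Set V :=
  {v | v ∈ H.verts ∧ (H.neighborSet v).ncard = 1}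

/-- `m = ⌈(k+1)/2⌉`. -/
def mval (k : ℕ) : ℕ := (k + 2) / 2

/-- Vertex type of the graph `G_k`: the `d`-vertices (`Sum.inl i` is `d_{i+1}`),
the `a`-vertices (indexed by indices in `D₁`), the `b`-vertices (indexed by indices
in `D₂`), and the extra vertex `r`. -/
abbrev Vk (k : ℕ) :=
  Fin k ⊕ ({i : Fin k // (i : ℕ) < mval k} ⊕ ({i : Fin k // mval k ≤ (i : ℕ) + 1} ⊕ Unit))

/-- The graph `G_k`: each `a_i` is adjacent to all of `D₁ \ {d_i}`, each `b_j` is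
adjacent to all of `D₂ \ {d_j}`, and `r` is adjacent to every `a_i` and `b_j`. -/
def Gk (k : ℕ) : SimpleGraph (Vk k) :=
  SimpleGraph.fromRel (fun x y =>
    match x, y with
    | Sum.inl d, Sum.inr (Sum.inl a) => (d : ℕ) < mval k ∧ d ≠ a.1
    | Sum.inl d, Sum.inr (Sum.inr (Sum.inl b)) => mval k ≤ (d : ℕ) + 1 ∧ d ≠ b.1
    | Sum.inr (Sum.inl _), Sum.inr (Sum.inr (Sum.inr _)) => True
    | Sum.inr (Sum.inr (Sum.inl _)), Sum.inr (Sum.inr (Sum.inr _)) => True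
    | _, _ => False)

/-- The vertex `r` of `G_k`. -/
def rVert (k : ℕ) : Vk k := Sum.inr (Sum.inr (Sum.inr ()))

open SimpleGraph

variable {k : ℕ}

lemma exists_adj_dist_lt {W : Type*} {G : SimpleGraph W} {v r : W} (hne : v ≠ r)
    (hreach : G.Reachable v r) : ∃ u, G.Adj v u ∧ G.dist u r < G.dist v r := by
  obtain ⟨p, hp⟩ := hreach.exists_walk_length_eq_dist
  cases p with
  | nil => exact absurd rfl hne
  | @cons _ w _ h q =>
    refine ⟨w, h, ?_⟩
    have h1 := SimpleGraph.dist_le q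
    simp only [SimpleGraph.Walk.length_cons] at hp
    omega

lemma connected_card_le {W : Type*} [Fintype W] {G : SimpleGraph W} (h : G.Connected) :
    Fintype.card W ≤ G.edgeSet.ncard + 1 := by
  classical
  obtain ⟨r⟩ := h.nonempty
  have key : ∀ v : W, ∃ u, v ≠ r → G.Adj v u ∧ G.dist u r < G.dist v r := by
    intro v
    by_cases hv : v = r
    · exact ⟨v, fun hc => absurd hv hc⟩
    · obtain ⟨u, hu⟩ := exists_adj_dist_lt hv (h.preconnected v r)
      exact ⟨u, fun _ => hu⟩
  choose u hu using key
  have hsub : Fintype.card W ≤ ({v : W | v ≠ r} : Set W).ncard + 1 := by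
    have : (Set.univ : Set W) = insert r {v : W | v ≠ r} := by
      ext x; simp [eq_comm, em]
    calc Fintype.card W = (Set.univ : Set W).ncard := by
          rw [Set.ncard_univ, Nat.card_eq_fintype_card]
      _ ≤ _ := by rw [this]; exact Set.ncard_insert_le _ _
  refine hsub.trans (Nat.add_le_add_right ?_ 1)
  apply Set.ncard_le_ncard_of_injOn (fun v => s(v, u v))
  · intro v hv
    exact (SimpleGraph.mem_edgeSet G).mpr (hu v hv).1
  · intro v hv w hw hvw
    simp only [Sym2.eq_iff] at hvw
    rcases hvw with ⟨rfl, -⟩ | ⟨h1, h2⟩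
    · rfl
    · exfalso
      have d1 := (hu v hv).2
      have d2 := (hu w hw).2
      rw [h2] at d1
      rw [← h1] at d2
      omega

lemma subgraph_verts_le_edges {V : Type*} [Fintype V] {G : SimpleGraph V} {H : G.Subgraph}
    (h : H.Connected) : H.verts.ncard ≤ H.edgeSet.ncard + 1 := by
  classical
  haveI : Fintype H.verts := (H.verts.toFinite).fintype
  have h1 : H.verts.ncard = Fintype.card H.verts := by
    rw [← Nat.card_coe_set_eq, Nat.card_eq_fintype_card]
  have h2 := connected_card_le h.coe
  have h3 : H.coe.edgeSet.ncard = H.edgeSet.ncard := by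
    rw [← SimpleGraph.Subgraph.image_coe_edgeSet_coe H]
    exact (Set.ncard_image_of_injective _ (Sym2.map.injective Subtype.val_injective)).symm
  omega



variable {k : ℕ}
abbrev dV (i : Fin k) : Vk k := Sum.inl i
abbrev aV (a : {i : Fin k // (i : ℕ) < mval k}) : Vk k := Sum.inr (Sum.inl a)
abbrev bV (b : {i : Fin k // mval k ≤ (i : ℕ) + 1}) : Vk k := Sum.inr (Sum.inr (Sum.inl b))

lemma adj_da {i : Fin k} {a} (h1 : (i : ℕ) < mval k) (h2 : (i:ℕ) ≠ (a.1:ℕ)) :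
    (Gk k).Adj (dV i) (aV a) := by
  rw [Gk, SimpleGraph.fromRel_adj]
  refine ⟨by simp, Or.inl ⟨h1, fun hc => h2 (by rw [hc])⟩⟩

lemma adj_db {i : Fin k} {b} (h1 : mval k ≤ (i : ℕ) + 1) (h2 : (i:ℕ) ≠ (b.1:ℕ)) :
    (Gk k).Adj (dV i) (bV b) := by
  rw [Gk, SimpleGraph.fromRel_adj]
  exact ⟨by simp, Or.inl ⟨h1, fun hc => h2 (by rw [hc])⟩⟩

lemma adj_ar (a) : (Gk k).Adj (aV a) (rVert k) := by
  rw [Gk, SimpleGraph.fromRel_adj]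
  exact ⟨by simp [rVert], Or.inl trivial⟩

lemma adj_br (b) : (Gk k).Adj (bV b) (rVert k) := by
  rw [Gk, SimpleGraph.fromRel_adj]
  exact ⟨by simp [rVert], Or.inl trivial⟩

lemma adj_dV_cases {i : Fin k} {y : Vk k} (h : (Gk k).Adj (dV i) y) :
    (∃ a, y = aV a ∧ (i : ℕ) < mval k ∧ (i:ℕ) ≠ (a.1:ℕ)) ∨
    (∃ b, y = bV b ∧ mval k ≤ (i : ℕ) + 1 ∧ (i:ℕ) ≠ (b.1:ℕ)) := by
  rw [Gk, SimpleGraph.fromRel_adj] at h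
  obtain ⟨hne, h | h⟩ := h <;>
  rcases y with j | (a | (b | u))
  · exact absurd h id
  · exact Or.inl ⟨a, rfl, h.1, fun hc => h.2 (Fin.ext hc)⟩
  · exact Or.inr ⟨b, rfl, h.1, fun hc => h.2 (Fin.ext hc)⟩
  · exact absurd h id
  · exact absurd h id
  · exact absurd h id
  · exact absurd h id
  · exact absurd h id

lemma adj_aV_cases {a} {y : Vk k} (h : (Gk k).Adj (aV a) y) :
    (∃ i : Fin k, y = dV i ∧ (i : ℕ) < mval k ∧ (i:ℕ) ≠ (a.1:ℕ)) ∨ y = rVert k := by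
  rw [Gk, SimpleGraph.fromRel_adj] at h
  obtain ⟨hne, h | h⟩ := h <;>
  rcases y with j | (a' | (b | u))
  · exact absurd h id
  · exact absurd h id
  · exact absurd h id
  · exact Or.inr rfl
  · exact Or.inl ⟨j, rfl, h.1, fun hc => h.2 (Fin.ext (by omega))⟩
  · exact absurd h id
  · exact absurd h id
  · exact absurd h id

lemma adj_bV_cases {b} {y : Vk k} (h : (Gk k).Adj (bV b) y) :
    (∃ i : Fin k, y = dV i ∧ mval k ≤ (i : ℕ) + 1 ∧ (i:ℕ) ≠ (b.1:ℕ)) ∨ y = rVert k := by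
  rw [Gk, SimpleGraph.fromRel_adj] at h
  obtain ⟨hne, h | h⟩ := h <;>
  rcases y with j | (a' | (b' | u))
  · exact absurd h id
  · exact absurd h id
  · exact absurd h id
  · exact Or.inr rfl
  · exact Or.inl ⟨j, rfl, h.1, fun hc => h.2 (Fin.ext (by omega))⟩
  · exact absurd h id
  · exact absurd h id
  · exact absurd h id

lemma glue {V : Type*} [Fintype V] {G : SimpleGraph V} (K : G.Subgraph) (hK : K.Connected)
    (T : Finset V) (f : V → V) (hadj : ∀ v ∈ T, G.Adj v (f v)) (hf : ∀ v ∈ T, f v ∈ K.verts) :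
    ∃ H : G.Subgraph, H.Connected ∧ K.verts ⊆ H.verts ∧ ↑T ⊆ H.verts ∧
      H.edgeSet.ncard ≤ K.edgeSet.ncard + T.card := by
  classical
  induction T using Finset.induction with
  | empty => exact ⟨K, hK, subset_rfl, by simp, by simp⟩
  | @insert a T ha ih =>
    obtain ⟨H, hHc, hKH, hTH, hE⟩ := ih (fun v hv => hadj v (Finset.mem_insert_of_mem hv))
      (fun v hv => hf v (Finset.mem_insert_of_mem hv))
    have hadja := hadj a (Finset.mem_insert_self a T)
    refine ⟨H ⊔ G.subgraphOfAdj hadja, ?_, ?_, ?_, ?_⟩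
    · refine SimpleGraph.Subgraph.connected_sup hHc.preconnected (SimpleGraph.Subgraph.subgraphOfAdj_connected hadja).preconnected ⟨f a, ?_⟩
      simp only [Subgraph.verts_inf, Set.mem_inter_iff]
      exact ⟨hKH (hf a (Finset.mem_insert_self a T)), by simp⟩
    · exact fun v hv => Set.mem_union_left _ (hKH hv)
    · intro v hv
      simp only [Finset.coe_insert, Set.mem_insert_iff] at hv
      rcases hv with rfl | hv
      · simp [Subgraph.verts_sup]
      · exact Set.mem_union_left _ (hTH hv)
    · rw [SimpleGraph.Subgraph.edgeSet_sup]
      calc (H.edgeSet ∪ (G.subgraphOfAdj hadja).edgeSet).ncard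
          ≤ H.edgeSet.ncard + (G.subgraphOfAdj hadja).edgeSet.ncard := Set.ncard_union_le _ _
        _ ≤ K.edgeSet.ncard + T.card + 1 := by
            rw [SimpleGraph.edgeSet_subgraphOfAdj]
            have : ({s(a, f a)} : Set (Sym2 V)).ncard = 1 := Set.ncard_singleton _
            omega
        _ = K.edgeSet.ncard + (insert a T).card := by rw [Finset.card_insert_of_notMem ha]; omega

lemma mval_facts (hk : 5 ≤ k) : 3 ≤ mval k ∧ mval k + 2 ≤ k := by unfold mval; omega

lemma card_filter_le (P : Fin k → Prop) [DecidablePred P] (n : ℕ) (g : ℕ → ℕ)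
    (hmaps : ∀ i : Fin k, P i → g i < n)
    (hinj : ∀ i j : Fin k, P i → P j → g i = g j → (i : ℕ) = (j : ℕ)) :
    (Finset.univ.filter P).card ≤ n := by
  have := Finset.card_le_card_of_injOn (s := Finset.univ.filter P) (t := Finset.range n)
    (fun i : Fin k => g (i : ℕ))
    (fun i hi => Finset.mem_range.mpr (hmaps i (Finset.mem_filter.mp hi).2))
    (fun i hi j hj hij => Fin.ext (hinj i j (Finset.mem_filter.mp hi).2
      (Finset.mem_filter.mp hj).2 hij))
  simpa using this

set_option maxHeartbeats 1000000 in
lemma exists_tree_D (hk : 5 ≤ k) : ∃ H : (Gk k).Subgraph, H.Connected ∧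
    Set.range (Sum.inl : Fin k → Vk k) ⊆ H.verts ∧ H.edgeSet.ncard ≤ k + 3 := by
  classical
  obtain ⟨hm3, hmk⟩ := mval_facts hk
  set m := mval k with hm
  have hk0 : 0 < k := by omega
  -- index abbreviations
  have h0m : ((⟨0, by omega⟩ : Fin k) : ℕ) < m := by simp; try omega
  have h1m : ((⟨1, by omega⟩ : Fin k) : ℕ) < m := by simp; try omega
  set A0 : {i : Fin k // (i : ℕ) < mval k} := ⟨⟨0, by omega⟩, h0m⟩ with hA0
  set A1 : {i : Fin k // (i : ℕ) < mval k} := ⟨⟨1, by omega⟩, h1m⟩ with hA1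
  set B0 : {i : Fin k // mval k ≤ (i : ℕ) + 1} := ⟨⟨m - 1, by omega⟩, by simp; try omega⟩
    with hB0
  set B1 : {i : Fin k // mval k ≤ (i : ℕ) + 1} := ⟨⟨m, by omega⟩, by simp; try omega⟩
    with hB1
  set T1 : Finset (Vk k) :=
    (Finset.univ.filter (fun i : Fin k => 1 ≤ (i : ℕ) ∧ (i : ℕ) ≤ m - 1)).image Sum.inl with hT1
  set Tlast : Finset (Vk k) :=
    (Finset.univ.filter (fun i : Fin k => (i : ℕ) = m ∨ (m + 2 ≤ (i : ℕ) ∧ (i : ℕ) ≤ k - 1))).image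
      Sum.inl with hTlast
  have hT1card : T1.card ≤ m - 1 := by
    refine le_trans (Finset.card_image_le) ?_
    exact card_filter_le _ (m - 1) (fun n => n - 1) (fun i hi => by omega)
      (fun i j hi hj hij => by omega)
  have hTlastcard : Tlast.card ≤ k - m - 1 := by
    refine le_trans (Finset.card_image_le) ?_
    exact card_filter_le _ (k - m - 1) (fun n => if n = m then 0 else n - m - 1)
      (fun i hi => by
        rcases hi with h | h
        · rw [if_pos h]; omega
        · rw [if_neg (by omega)]; omega)
      (fun i j hi hj hij => by
        rcases hi with h | h <;> rcases hj with h' | h'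
        · omega
        · rw [if_pos h, if_neg (by omega)] at hij; omega
        · rw [if_neg (by omega), if_pos h'] at hij; omega
        · rw [if_neg (by omega), if_neg (by omega)] at hij; omega)
  -- step 1
  obtain ⟨H1, c1, s1, t1, e1⟩ := glue ((Gk k).singletonSubgraph (aV A0))
    SimpleGraph.Subgraph.singletonSubgraph_connected T1 (fun _ => aV A0)
    (by
      intro v hv
      obtain ⟨i, hi, rfl⟩ := Finset.mem_image.mp hv
      obtain ⟨-, h1, h2⟩ := Finset.mem_filter.mp hi
      exact adj_da (by omega) (by simp [hA0]; omega))
    (fun v _ => by simp)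
  have ha0 : aV A0 ∈ H1.verts := s1 (by simp)
  -- step 2 : a1 via d2
  have hd2T1 : (dV ⟨2, by omega⟩ : Vk k) ∈ T1 := by
    refine Finset.mem_image.mpr ⟨⟨2, by omega⟩, Finset.mem_filter.mpr ⟨Finset.mem_univ _, ?_⟩, rfl⟩
    simp; omega
  obtain ⟨H2, c2, s2, t2, e2⟩ := glue H1 c1 {aV A1} (fun _ => dV ⟨2, by omega⟩)
    (by
      intro v hv
      rw [Finset.mem_singleton] at hv
      subst hv
      exact (adj_da (i := ⟨2, by omega⟩) (by simp; try omega) (by simp [hA1])).symm)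
    (fun v _ => t1 (by exact_mod_cast hd2T1))
  -- step 3 : d0 via a1
  obtain ⟨H3, c3, s3, t3, e3⟩ := glue H2 c2 {dV ⟨0, by omega⟩} (fun _ => aV A1)
    (by
      intro v hv
      rw [Finset.mem_singleton] at hv
      subst hv
      exact adj_da h0m (by simp [hA1]))
    (fun v _ => t2 (by simp))
  -- step 4 : b_m via d_{m-1}
  have hdm1T1 : (dV ⟨m - 1, by omega⟩ : Vk k) ∈ T1 := by
    refine Finset.mem_image.mpr ⟨⟨m - 1, by omega⟩,
      Finset.mem_filter.mpr ⟨Finset.mem_univ _, ?_⟩, rfl⟩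
    simp; omega
  obtain ⟨H4, c4, s4, t4, e4⟩ := glue H3 c3 {bV B1} (fun _ => dV ⟨m - 1, by omega⟩)
    (by
      intro v hv
      rw [Finset.mem_singleton] at hv
      subst hv
      exact (adj_db (i := ⟨m - 1, by omega⟩) (by simp; try omega) (by simp [hB1]; omega)).symm)
    (fun v _ => s3 (s2 (t1 (by exact_mod_cast hdm1T1))))
  -- step 5 : d_{m+1} via b_m
  obtain ⟨H5, c5, s5, t5, e5⟩ := glue H4 c4 {dV ⟨m + 1, by omega⟩} (fun _ => bV B1)
    (by
      intro v hv
      rw [Finset.mem_singleton] at hv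
      subst hv
      exact adj_db (by simp; try omega) (by simp [hB1]; try omega))
    (fun v _ => t4 (by simp))
  -- step 6 : b_{m-1} via d_{m+1}
  obtain ⟨H6, c6, s6, t6, e6⟩ := glue H5 c5 {bV B0} (fun _ => dV ⟨m + 1, by omega⟩)
    (by
      intro v hv
      rw [Finset.mem_singleton] at hv
      subst hv
      exact (adj_db (i := ⟨m + 1, by omega⟩) (by simp; try omega)
        (by simp [hB0]; omega)).symm)
    (fun v _ => t5 (by simp))
  -- step 7 : remaining d's via b_{m-1}
  obtain ⟨H7, c7, s7, t7, e7⟩ := glue H6 c6 Tlast (fun _ => bV B0)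
    (by
      intro v hv
      obtain ⟨i, hi, rfl⟩ := Finset.mem_image.mp hv
      obtain ⟨-, hcond⟩ := Finset.mem_filter.mp hi
      exact adj_db (by omega) (by simp [hB0]; omega))
    (fun v _ => t6 (by simp))
  refine ⟨H7, c7, ?_, ?_⟩
  · rintro x ⟨i, rfl⟩
    have hi := i.isLt
    have hcases : (i : ℕ) = 0 ∨ (1 ≤ (i : ℕ) ∧ (i : ℕ) ≤ m - 1) ∨ (i : ℕ) = m + 1 ∨
        ((i : ℕ) = m ∨ (m + 2 ≤ (i : ℕ) ∧ (i : ℕ) ≤ k - 1)) := by omega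
    rcases hcases with h | h | h | h
    · refine s7 (s6 (s5 (s4 (t3 ?_))))
      have hieq : i = (⟨0, hk0⟩ : Fin k) := Fin.ext h
      simp [hieq]
    · refine s7 (s6 (s5 (s4 (s3 (s2 (t1 ?_))))))
      exact_mod_cast Finset.mem_image.mpr ⟨i, Finset.mem_filter.mpr ⟨Finset.mem_univ _, h⟩, rfl⟩
    · refine s7 (s6 (t5 ?_))
      have hieq : i = (⟨m + 1, by omega⟩ : Fin k) := Fin.ext h
      simp [hieq]
    · refine t7 ?_
      exact_mod_cast Finset.mem_image.mpr ⟨i, Finset.mem_filter.mpr ⟨Finset.mem_univ _, h⟩, rfl⟩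
  · have e0 : ((Gk k).singletonSubgraph (aV A0)).edgeSet.ncard = 0 := by
      rw [SimpleGraph.edgeSet_singletonSubgraph]; simp
    simp only [Finset.card_singleton] at e2 e3 e4 e5 e6
    omega

/-- If a set `P` is closed under `H`-adjacency, it cannot separate a connected subgraph. -/
lemma no_cut {V : Type*} {G : SimpleGraph V} {H : G.Subgraph} (hc : H.Connected)
    {P : Set V} {x y : V} (hx : x ∈ H.verts) (hy : y ∈ H.verts) (hxP : x ∈ P) (hyP : y ∉ P)
    (hclosed : ∀ u v, H.Adj u v → u ∈ P → v ∈ P) : False := by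
  obtain ⟨w⟩ := hc.coe ⟨x, hx⟩ ⟨y, hy⟩
  obtain ⟨d, -, hd1, hd2⟩ := w.exists_boundary_dart (Subtype.val ⁻¹' P) hxP hyP
  have hadj : H.Adj d.fst.val d.snd.val := d.adj
  exact hd2 (hclosed _ _ hadj hd1)

/-- Every `d`-vertex in a connected subgraph containing all of `D` has a neighbor. -/
lemma d_has_neighbor (hk : 5 ≤ k) {H : (Gk k).Subgraph} (hc : H.Connected)
    (hD : Set.range (Sum.inl : Fin k → Vk k) ⊆ H.verts) (i : Fin k) :
    ∃ y, H.Adj (dV i) y := by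
  have hk0 : 0 < k := by omega
  set j : Fin k := if (i : ℕ) = 0 then ⟨1, by omega⟩ else ⟨0, by omega⟩ with hj
  have hij : (j : ℕ) ≠ (i : ℕ) := by
    rw [hj]; split <;> simp <;> omega
  have hxv : dV i ∈ H.verts := hD ⟨i, rfl⟩
  have hyv : dV j ∈ H.verts := hD ⟨j, rfl⟩
  by_contra hno
  push_neg at hno
  exact no_cut hc hxv hyv (Set.mem_singleton _)
    (fun hc' => hij (by
      have := Set.mem_singleton_iff.mp hc'
      simp only [dV, Sum.inl.injEq] at this
      rw [this]))
    (fun u v hadj hu => by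
      rw [Set.mem_singleton_iff] at hu
      subst hu
      exact absurd hadj (hno v))

lemma four_extras (hk : 5 ≤ k) {H : (Gk k).Subgraph} (hc : H.Connected)
    (hD : Set.range (Sum.inl : Fin k → Vk k) ⊆ H.verts) :
    ∃ S : Finset (Vk k), ↑S ⊆ H.verts ∧ S.card = 4 ∧ ∀ x ∈ S, ∀ i : Fin k, x ≠ dV i := by
  classical
  obtain ⟨hm3, hmk⟩ := mval_facts hk
  set m := mval k with hm
  have hk0 : 0 < k := by omega
  have nbrA : ∀ i : Fin k, (i : ℕ) + 1 < m → ∃ a, aV a ∈ H.verts ∧ (a.1 : ℕ) ≠ (i : ℕ) := by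
    intro i hi
    obtain ⟨y, hy⟩ := d_has_neighbor hk hc hD i
    have hyv : y ∈ H.verts := hy.snd_mem
    rcases adj_dV_cases (H.adj_sub hy) with ⟨a, rfl, -, hne⟩ | ⟨b, rfl, hcond, -⟩
    · exact ⟨a, hyv, fun h => hne h.symm⟩
    · omega
  have nbrB : ∀ i : Fin k, m ≤ (i : ℕ) → ∃ b, bV b ∈ H.verts ∧ (b.1 : ℕ) ≠ (i : ℕ) := by
    intro i hi
    obtain ⟨y, hy⟩ := d_has_neighbor hk hc hD i
    have hyv : y ∈ H.verts := hy.snd_mem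
    rcases adj_dV_cases (H.adj_sub hy) with ⟨a, rfl, hcond, -⟩ | ⟨b, rfl, -, hne⟩
    · omega
    · exact ⟨b, hyv, fun h => hne h.symm⟩
  obtain ⟨a1, ha1v, -⟩ := nbrA ⟨0, by omega⟩ (by simp; omega)
  obtain ⟨b1, hb1v, -⟩ := nbrB ⟨k - 1, by omega⟩ (by simp; omega)
  have hcard4 : ∀ (a a' : {i : Fin k // (i : ℕ) < mval k})
      (b b' : {i : Fin k // mval k ≤ (i : ℕ) + 1}), True := fun _ _ _ _ => trivial
  by_cases hA2 : ∃ a2, aV a2 ∈ H.verts ∧ a2 ≠ a1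
  · obtain ⟨a2, ha2v, ha2ne⟩ := hA2
    by_cases hB2 : ∃ b2, bV b2 ∈ H.verts ∧ b2 ≠ b1
    · obtain ⟨b2, hb2v, hb2ne⟩ := hB2
      refine ⟨{aV a1, aV a2, bV b1, bV b2}, ?_, ?_, ?_⟩
      · intro x hx
        simp only [Finset.coe_insert, Set.mem_insert_iff, Finset.coe_singleton,
          Set.mem_singleton_iff] at hx
        rcases hx with rfl | rfl | rfl | rfl <;> assumption
      · rw [Finset.card_insert_of_notMem (by simp [ha2ne, ha2ne.symm]),
          Finset.card_insert_of_notMem (by simp),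
          Finset.card_insert_of_notMem (by simp [hb2ne, hb2ne.symm]),
          Finset.card_singleton]
      · intro x hx i
        simp only [Finset.mem_insert, Finset.mem_singleton] at hx
        rcases hx with rfl | rfl | rfl | rfl <;> simp [dV]
    · by_cases hr : rVert k ∈ H.verts
      · refine ⟨{aV a1, aV a2, bV b1, rVert k}, ?_, ?_, ?_⟩
        · intro x hx
          simp only [Finset.coe_insert, Set.mem_insert_iff, Finset.coe_singleton,
            Set.mem_singleton_iff] at hx
          rcases hx with rfl | rfl | rfl | rfl <;> assumption
        · rw [Finset.card_insert_of_notMem (by simp [ha2ne, ha2ne.symm, rVert]),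
            Finset.card_insert_of_notMem (by simp [rVert]),
            Finset.card_insert_of_notMem (by simp [rVert]),
            Finset.card_singleton]
        · intro x hx i
          simp only [Finset.mem_insert, Finset.mem_singleton] at hx
          rcases hx with rfl | rfl | rfl | rfl <;> simp [dV, rVert]
      · -- unique b, no r : cut around b1 and high d's
        exfalso
        push_neg at hB2
        have hb1m : (b1.1 : ℕ) = m - 1 := by
          by_contra hbne
          have hge : m ≤ (b1.1 : ℕ) := by have := b1.2; omega
          obtain ⟨b', hb'v, hb'ne⟩ := nbrB b1.1 hge
          exact hb'ne (congrArg (fun x => ((x.1 : Fin k) : ℕ)) (hB2 b' hb'v))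
        refine no_cut hc hb1v (hD ⟨⟨0, by omega⟩, rfl⟩)
          (P := {z | z = bV b1 ∨ ∃ i : Fin k, z = dV i ∧ m ≤ (i : ℕ)}) (Or.inl rfl) ?_ ?_
        · rintro (h | ⟨i, hi, hge⟩)
          · simp [dV, bV] at h
          · simp only [dV, Sum.inl.injEq] at hi
            rw [← hi] at hge
            simp at hge
            omega
        · rintro u v hadj (rfl | ⟨i, rfl, hge⟩)
          · rcases adj_bV_cases (H.adj_sub hadj) with ⟨i, rfl, hcond, hne⟩ | rfl
            · exact Or.inr ⟨i, rfl, by omega⟩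
            · exact absurd hadj.snd_mem hr
          · rcases adj_dV_cases (H.adj_sub hadj) with ⟨a, rfl, hcond, -⟩ | ⟨b, rfl, -, -⟩
            · omega
            · exact Or.inl (by rw [hB2 b hadj.snd_mem])
  · -- unique a
    push_neg at hA2
    have ha1m : (a1.1 : ℕ) = m - 1 := by
      by_contra hane
      have hlt : (a1.1 : ℕ) + 1 < m := by have := a1.2; omega
      obtain ⟨a', ha'v, ha'ne⟩ := nbrA a1.1 hlt
      exact ha'ne (congrArg (fun x => ((x.1 : Fin k) : ℕ)) (hA2 a' ha'v))
    by_cases hr : rVert k ∈ H.verts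
    · by_cases hB2 : ∃ b2, bV b2 ∈ H.verts ∧ b2 ≠ b1
      · obtain ⟨b2, hb2v, hb2ne⟩ := hB2
        refine ⟨{aV a1, bV b1, bV b2, rVert k}, ?_, ?_, ?_⟩
        · intro x hx
          simp only [Finset.coe_insert, Set.mem_insert_iff, Finset.coe_singleton,
            Set.mem_singleton_iff] at hx
          rcases hx with rfl | rfl | rfl | rfl <;> assumption
        · rw [Finset.card_insert_of_notMem (by simp [rVert]),
            Finset.card_insert_of_notMem (by simp [hb2ne, hb2ne.symm, rVert]),
            Finset.card_insert_of_notMem (by simp [rVert]),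
            Finset.card_singleton]
        · intro x hx i
          simp only [Finset.mem_insert, Finset.mem_singleton] at hx
          rcases hx with rfl | rfl | rfl | rfl <;> simp [dV, rVert]
      · -- unique a and unique b, both index m-1 : d_{m-1} has no possible neighbor
        exfalso
        push_neg at hB2
        have hb1m : (b1.1 : ℕ) = m - 1 := by
          by_contra hbne
          have hge : m ≤ (b1.1 : ℕ) := by have := b1.2; omega
          obtain ⟨b', hb'v, hb'ne⟩ := nbrB b1.1 hge
          exact hb'ne (congrArg (fun x => ((x.1 : Fin k) : ℕ)) (hB2 b' hb'v))
        obtain ⟨y, hy⟩ := d_has_neighbor hk hc hD ⟨m - 1, by omega⟩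
        have hyv : y ∈ H.verts := hy.snd_mem
        rcases adj_dV_cases (H.adj_sub hy) with ⟨a, rfl, -, hne⟩ | ⟨b, rfl, -, hne⟩
        · have := congrArg (fun x => ((x.1 : Fin k) : ℕ)) (hA2 a hyv)
          simp only at this hne
          simp at hne
          omega
        · have := congrArg (fun x => ((x.1 : Fin k) : ℕ)) (hB2 b hyv)
          simp only at this hne
          simp at hne
          omega
    · -- unique a, no r : cut around a1 and low d's
      exfalso
      refine no_cut hc ha1v (hD ⟨⟨k - 1, by omega⟩, rfl⟩)
        (P := {z | z = aV a1 ∨ ∃ i : Fin k, z = dV i ∧ (i : ℕ) + 1 < m}) (Or.inl rfl) ?_ ?_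
      · rintro (h | ⟨i, hi, hlt⟩)
        · simp [dV, aV] at h
        · simp only [dV, Sum.inl.injEq] at hi
          rw [← hi] at hlt
          simp at hlt
          omega
      · rintro u v hadj (rfl | ⟨i, rfl, hlt⟩)
        · rcases adj_aV_cases (H.adj_sub hadj) with ⟨i, rfl, hcond, hne⟩ | rfl
          · exact Or.inr ⟨i, rfl, by omega⟩
          · exact absurd hadj.snd_mem hr
        · rcases adj_dV_cases (H.adj_sub hadj) with ⟨a, rfl, -, -⟩ | ⟨b, rfl, hcond, -⟩
          · exact Or.inl (by rw [hA2 a hadj.snd_mem])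
          · omega

lemma lower_D (hk : 5 ≤ k) {H : (Gk k).Subgraph} (hc : H.Connected)
    (hD : Set.range (Sum.inl : Fin k → Vk k) ⊆ H.verts) :
    k + 3 ≤ H.edgeSet.ncard := by
  classical
  obtain ⟨S, hSv, hScard, hSnd⟩ := four_extras hk hc hD
  have hunion : Set.range (Sum.inl : Fin k → Vk k) ∪ ↑S ⊆ H.verts := Set.union_subset hD hSv
  have hdisj : Disjoint (Set.range (Sum.inl : Fin k → Vk k)) (↑S : Set (Vk k)) := by
    rw [Set.disjoint_right]
    intro x hx hmem
    obtain ⟨i, rfl⟩ := hmem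
    exact hSnd _ hx i rfl
  have hrange : (Set.range (Sum.inl : Fin k → Vk k)).ncard = k := by
    rw [← Set.image_univ, Set.ncard_image_of_injective _ Sum.inl_injective, Set.ncard_univ]
    simp
  have hSn : (↑S : Set (Vk k)).ncard = 4 := by rw [Set.ncard_coe_finset, hScard]
  have hun : (Set.range (Sum.inl : Fin k → Vk k) ∪ ↑S).ncard = k + 4 := by
    rw [Set.ncard_union_eq hdisj, hrange, hSn]
  have hverts : k + 4 ≤ H.verts.ncard := by
    rw [← hun]
    exact Set.ncard_le_ncard hunion (Set.toFinite _)
  have := subgraph_verts_le_edges hc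
  omega

lemma exists_tree_S (hk : 5 ≤ k) (S : Finset (Vk k)) (hcard : S.card = k)
    {x : Vk k} (hx : x ∈ S) (hnd : ∀ i : Fin k, x ≠ dV i) :
    ∃ H : (Gk k).Subgraph, H.Connected ∧ ↑S ⊆ H.verts ∧ H.edgeSet.ncard ≤ k + 3 := by
  classical
  obtain ⟨hm3, hmk⟩ := mval_facts hk
  set m := mval k with hm
  have hk0 : 0 < k := by omega
  set A0 : {i : Fin k // (i : ℕ) < mval k} := ⟨⟨0, by omega⟩, by simp; omega⟩ with hA0
  set A1 : {i : Fin k // (i : ℕ) < mval k} := ⟨⟨1, by omega⟩, by simp; omega⟩ with hA1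
  set B0 : {i : Fin k // mval k ≤ (i : ℕ) + 1} := ⟨⟨m - 1, by omega⟩, by simp; omega⟩ with hB0
  set B1 : {i : Fin k // mval k ≤ (i : ℕ) + 1} := ⟨⟨m, by omega⟩, by simp; omega⟩ with hB1
  have hA01 : A0 ≠ A1 := fun h => by
    have := congrArg (fun z => ((z.1 : Fin k) : ℕ)) h
    simp [hA0, hA1] at this
  have hB01 : B0 ≠ B1 := fun h => by
    have := congrArg (fun z => ((z.1 : Fin k) : ℕ)) h
    simp [hB0, hB1] at this; omega
  obtain ⟨p, q, s', t', hpq, hst, hxC⟩ :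
      ∃ (p q : {i : Fin k // (i : ℕ) < mval k}) (s' t' : {i : Fin k // mval k ≤ (i : ℕ) + 1}),
        p ≠ q ∧ s' ≠ t' ∧ x ∈ ({rVert k, aV p, aV q, bV s', bV t'} : Finset (Vk k)) := by
    rcases x with i | (a | (b | u))
    · exact absurd rfl (hnd i)
    · by_cases h : a = A0
      · exact ⟨a, A1, B0, B1, h ▸ hA01, hB01, by simp⟩
      · exact ⟨a, A0, B0, B1, h, hB01, by simp⟩
    · by_cases h : b = B0
      · exact ⟨A0, A1, b, B1, hA01, h ▸ hB01, by simp⟩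
      · exact ⟨A0, A1, b, B0, hA01, h, by simp⟩
    · exact ⟨A0, A1, B0, B1, hA01, hB01, by simp [rVert]⟩
  set C : Finset (Vk k) := {rVert k, aV p, aV q, bV s', bV t'} with hC
  -- the central star
  obtain ⟨K, cK, sK, tK, eK⟩ := glue ((Gk k).singletonSubgraph (rVert k))
    SimpleGraph.Subgraph.singletonSubgraph_connected ({aV p, aV q, bV s', bV t'} : Finset (Vk k))
    (fun _ => rVert k)
    (by
      intro v hv
      simp only [Finset.mem_insert, Finset.mem_singleton] at hv
      rcases hv with rfl | rfl | rfl | rfl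
      · exact adj_ar p
      · exact adj_ar q
      · exact adj_br s'
      · exact adj_br t')
    (fun v _ => by simp)
  have hCK : ↑C ⊆ K.verts := by
    intro z hz
    simp only [hC, Finset.coe_insert, Set.mem_insert_iff, Finset.coe_singleton,
      Set.mem_singleton_iff] at hz
    rcases hz with rfl | rfl | rfl | rfl | rfl
    · exact sK (by simp)
    · exact tK (by simp)
    · exact tK (by simp)
    · exact tK (by simp)
    · exact tK (by simp)
  set f : Vk k → Vk k := fun z =>
    match z with
    | Sum.inl i =>
        if (i : ℕ) < m then (if i = p.1 then aV q else aV p)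
        else (if i = s'.1 then bV t' else bV s')
    | _ => rVert k with hf
  have hpq1 : (p.1 : Fin k) ≠ q.1 := fun h => hpq (Subtype.ext h)
  have hst1 : (s'.1 : Fin k) ≠ t'.1 := fun h => hst (Subtype.ext h)
  obtain ⟨H, cH, sH, tH, eH⟩ := glue K cK (S \ C) f
    (by
      intro v hv
      obtain ⟨hvS, hvC⟩ := Finset.mem_sdiff.mp hv
      rcases v with i | (a | (b | u))
      · simp only [hf]
        by_cases hi : (i : ℕ) < m
        · rw [if_pos hi]
          by_cases hip : i = p.1
          · rw [if_pos hip]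
            exact adj_da hi (fun h => hpq1 (hip ▸ Fin.ext h))
          · rw [if_neg hip]
            exact adj_da hi (fun h => hip (Fin.ext h))
        · rw [if_neg hi]
          by_cases his : i = s'.1
          · rw [if_pos his]
            exact adj_db (by omega) (fun h => hst1 (his ▸ Fin.ext h))
          · rw [if_neg his]
            exact adj_db (by omega) (fun h => his (Fin.ext h))
      · exact adj_ar a
      · exact adj_br b
      · exact absurd (by simp [hC, rVert]) hvC)
    (by
      intro v hv
      rcases v with i | (a | (b | u))
      · simp only [hf]
        by_cases hi : (i : ℕ) < m
        · rw [if_pos hi]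
          by_cases hip : i = p.1
          · rw [if_pos hip]; exact hCK (by simp [hC])
          · rw [if_neg hip]; exact hCK (by simp [hC])
        · rw [if_neg hi]
          by_cases his : i = s'.1
          · rw [if_pos his]; exact hCK (by simp [hC])
          · rw [if_neg his]; exact hCK (by simp [hC])
      · exact hCK (by simp [hC, hf])
      · exact hCK (by simp [hC, hf])
      · cases u
        exact hCK (by simp [hC, hf, rVert]))
  refine ⟨H, cH, ?_, ?_⟩
  · intro z hz
    by_cases hzC : z ∈ C
    · exact sH (hCK hzC)
    · exact tH (by
        simp only [Finset.coe_sdiff, Set.mem_diff, Finset.mem_coe]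
        exact ⟨hz, hzC⟩)
  · have hTcard : (S \ C).card ≤ k - 1 := by
      have hsub : S \ C ⊆ S.erase x := by
        intro v hv
        obtain ⟨hvS, hvC⟩ := Finset.mem_sdiff.mp hv
        exact Finset.mem_erase.mpr ⟨fun h => hvC (h ▸ hxC), hvS⟩
      calc (S \ C).card ≤ (S.erase x).card := Finset.card_le_card hsub
        _ = k - 1 := by rw [Finset.card_erase_of_mem hx, hcard]
    have h4 : ({aV p, aV q, bV s', bV t'} : Finset (Vk k)).card ≤ 4 := by
      refine le_trans (Finset.card_insert_le _ _) ?_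
      refine Nat.succ_le_succ ?_
      refine le_trans (Finset.card_insert_le _ _) ?_
      refine Nat.succ_le_succ ?_
      refine le_trans (Finset.card_insert_le _ _) ?_
      simp
    have e0 : ((Gk k).singletonSubgraph (rVert k)).edgeSet.ncard = 0 := by
      rw [SimpleGraph.edgeSet_singletonSubgraph]; simp
    omega



lemma steinerDist_D (hk : 5 ≤ k) :
    steinerDist (Gk k) (Set.range (Sum.inl : Fin k → Vk k)) = k + 3 := by
  obtain ⟨H0, c0, s0, e0⟩ := exists_tree_D hk
  unfold steinerDist
  apply le_antisymm
  · exact le_trans (Nat.sInf_le ⟨H0, c0, s0, rfl⟩) e0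
  · obtain ⟨H1, c1, s1, he⟩ := Nat.sInf_mem
      (⟨_, ⟨H0, c0, s0, rfl⟩⟩ : Set.Nonempty {n | ∃ H : (Gk k).Subgraph, H.Connected ∧
        Set.range (Sum.inl : Fin k → Vk k) ⊆ H.verts ∧ H.edgeSet.ncard = n})
    rw [← he]
    exact lower_D hk c1 s1

lemma coe_SD : ((Finset.univ.image (Sum.inl : Fin k → Vk k) : Finset (Vk k)) : Set (Vk k)) =
    Set.range (Sum.inl : Fin k → Vk k) := by
  rw [Finset.coe_image, Finset.coe_univ, Set.image_univ]

lemma upper_any (hk : 5 ≤ k) (S : Finset (Vk k)) (hcard : S.card = k) :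
    steinerDist (Gk k) (S : Set (Vk k)) ≤ k + 3 := by
  classical
  by_cases hall : ∀ x ∈ S, ∃ i : Fin k, x = dV i
  · have hsub : S ⊆ Finset.univ.image (Sum.inl : Fin k → Vk k) := fun x hx => by
      obtain ⟨i, rfl⟩ := hall x hx
      exact Finset.mem_image.mpr ⟨i, Finset.mem_univ _, rfl⟩
    have hcard' : (Finset.univ.image (Sum.inl : Fin k → Vk k)).card ≤ S.card := by
      rw [Finset.card_image_of_injective _ Sum.inl_injective, hcard]
      simp
    have heq := Finset.eq_of_subset_of_card_le hsub hcard'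
    rw [heq, coe_SD, steinerDist_D hk]
  · push_neg at hall
    obtain ⟨x, hx, hnd⟩ := hall
    obtain ⟨H, cH, sH, eH⟩ := exists_tree_S hk S hcard hx hnd
    exact le_trans (Nat.sInf_le ⟨H, cH, sH, rfl⟩) eH

theorem steinerEcc_d1 {k : ℕ} (hk : 5 ≤ k) :
    steinerEcc (Gk k) k (Sum.inl (⟨0, by omega⟩ : Fin k)) = k + 3 ∧
    steinerDist (Gk k) (Set.range (Sum.inl : Fin k → Vk k)) = k + 3 := by
  classical
  refine ⟨?_, steinerDist_D hk⟩
  have hk0 : 0 < k := by omega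
  have hmem : k + 3 ∈ {n | ∃ S : Finset (Vk k),
      Sum.inl (⟨0, by omega⟩ : Fin k) ∈ S ∧ S.card = k ∧ steinerDist (Gk k) (S : Set (Vk k)) = n} := by
    refine ⟨Finset.univ.image (Sum.inl : Fin k → Vk k),
      Finset.mem_image.mpr ⟨⟨0, by omega⟩, Finset.mem_univ _, rfl⟩, ?_, ?_⟩
    · rw [Finset.card_image_of_injective _ Sum.inl_injective]
      simp
    · rw [coe_SD]
      exact steinerDist_D hk
  have hbdd : ∀ n ∈ {n | ∃ S : Finset (Vk k),
      Sum.inl (⟨0, by omega⟩ : Fin k) ∈ S ∧ S.card = k ∧ steinerDist (Gk k) (S : Set (Vk k)) = n},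
      n ≤ k + 3 := by
    rintro n ⟨S, -, hcard, rfl⟩
    exact upper_any hk S hcard
  unfold steinerEcc
  exact le_antisymm (csSup_le ⟨k + 3, hmem⟩ hbdd) (le_csSup ⟨k + 3, hbdd⟩ hmem)
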